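/- arXiv:1707.07017 — 4 statements merged into one kernel-verified Lean document; each statement's English description precedes it below -/
import Mathlib

section
/- Let X ⊂ ℂ be a compact set and let f : ℂ \ X → ℂ be complex differentiable at every point of ℂ \ X. If R and S are two rectangles whose interiors both contain X, then the contour integral of f over ∂R equals the contour integral of f over ∂S. -/
open Complex Set intervalIntegral

/-- The contour integral of `f` over the counter-clockwise boundary of the rectangle
`{z : α ≤ Re z ≤ β, γ ≤ Im z ≤ δ}`. -/
noncomputable def rectBoundaryIntegral (f : ℂ → ℂ) (α β γ δ : ℝ) : ℂ :=
  (∫ x : ℝ in α..β, f (x + γ * Complex.I)) - (∫ x : ℝ in α..β, f (x + δ * Complex.I)) +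
    Complex.I * (∫ y : ℝ in γ..δ, f (β + y * Complex.I)) -
    Complex.I * (∫ y : ℝ in γ..δ, f (α + y * Complex.I))

lemma rectAux_zero (f : ℂ → ℂ) {α β γ δ : ℝ} (hαβ : α ≤ β) (hγδ : γ ≤ δ)
    (H : DifferentiableOn ℂ f (Set.Icc α β ×ℂ Set.Icc γ δ)) :
    rectBoundaryIntegral f α β γ δ = 0 := by
  have := Complex.integral_boundary_rect_eq_zero_of_differentiableOn f (α + γ * Complex.I)
    (β + δ * Complex.I) ?_
  · simpa [rectBoundaryIntegral, Complex.add_re, Complex.add_im, smul_eq_mul] using this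
  · simpa [Set.uIcc_of_le, hαβ, hγδ] using H

lemma rectAux_split_re (f : ℂ → ℂ) (α β γ δ m : ℝ)
    (h1 : IntervalIntegrable (fun x : ℝ => f (x + γ * Complex.I)) MeasureTheory.volume α m)
    (h2 : IntervalIntegrable (fun x : ℝ => f (x + γ * Complex.I)) MeasureTheory.volume m β)
    (h3 : IntervalIntegrable (fun x : ℝ => f (x + δ * Complex.I)) MeasureTheory.volume α m)
    (h4 : IntervalIntegrable (fun x : ℝ => f (x + δ * Complex.I)) MeasureTheory.volume m β) :
    rectBoundaryIntegral f α β γ δ =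
      rectBoundaryIntegral f α m γ δ + rectBoundaryIntegral f m β γ δ := by
  unfold rectBoundaryIntegral
  rw [← intervalIntegral.integral_add_adjacent_intervals h1 h2,
    ← intervalIntegral.integral_add_adjacent_intervals h3 h4]
  ring

lemma rectAux_split_im (f : ℂ → ℂ) (α β γ δ m : ℝ)
    (h1 : IntervalIntegrable (fun y : ℝ => f (α + y * Complex.I)) MeasureTheory.volume γ m)
    (h2 : IntervalIntegrable (fun y : ℝ => f (α + y * Complex.I)) MeasureTheory.volume m δ)
    (h3 : IntervalIntegrable (fun y : ℝ => f (β + y * Complex.I)) MeasureTheory.volume γ m)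
    (h4 : IntervalIntegrable (fun y : ℝ => f (β + y * Complex.I)) MeasureTheory.volume m δ) :
    rectBoundaryIntegral f α β γ δ =
      rectBoundaryIntegral f α β γ m + rectBoundaryIntegral f α β m δ := by
  unfold rectBoundaryIntegral
  rw [← intervalIntegral.integral_add_adjacent_intervals h1 h2,
    ← intervalIntegral.integral_add_adjacent_intervals h3 h4]
  ring

/-- Integrability of `f` along a horizontal segment avoiding `X`. -/
lemma intIntH {X : Set ℂ} {f : ℂ → ℂ} (hf : ∀ z ∉ X, DifferentiableAt ℂ f z)
    (a b c : ℝ) (h : ∀ x : ℝ, (x + c * Complex.I : ℂ) ∉ X) :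
    IntervalIntegrable (fun x : ℝ => f (x + c * Complex.I)) MeasureTheory.volume a b := by
  apply ContinuousOn.intervalIntegrable
  intro x _
  have : ContinuousAt (f ∘ fun x : ℝ => (x + c * Complex.I : ℂ)) x :=
    ContinuousAt.comp (g := f) (f := fun x : ℝ => (x + c * Complex.I : ℂ))
      (hf _ (h x)).continuousAt (by fun_prop)
  exact this.continuousWithinAt

/-- Integrability of `f` along a vertical segment avoiding `X`. -/
lemma intIntV {X : Set ℂ} {f : ℂ → ℂ} (hf : ∀ z ∉ X, DifferentiableAt ℂ f z)
    (a b c : ℝ) (h : ∀ y : ℝ, (c + y * Complex.I : ℂ) ∉ X) :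
    IntervalIntegrable (fun y : ℝ => f (c + y * Complex.I)) MeasureTheory.volume a b := by
  apply ContinuousOn.intervalIntegrable
  intro y _
  have : ContinuousAt (f ∘ fun y : ℝ => (c + y * Complex.I : ℂ)) y :=
    ContinuousAt.comp (g := f) (f := fun y : ℝ => (c + y * Complex.I : ℂ))
      (hf _ (h y)).continuousAt (by fun_prop)
  exact this.continuousWithinAt

lemma diffOn_of_disjoint {X : Set ℂ} {f : ℂ → ℂ} (hf : ∀ z ∉ X, DifferentiableAt ℂ f z)
    {s : Set ℂ} (h : ∀ z ∈ s, z ∉ X) : DifferentiableOn ℂ f s :=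
  fun z hz => (hf z (h z hz)).differentiableWithinAt

lemma rect_grow {X : Set ℂ} {f : ℂ → ℂ} (hf : ∀ z ∉ X, DifferentiableAt ℂ f z)
    {A α β B C γ δ D : ℝ} (hAα : A ≤ α) (hαβ : α ≤ β) (hβB : β ≤ B)
    (hCγ : C ≤ γ) (hγδ : γ ≤ δ) (hδD : δ ≤ D)
    (hXR : X ⊆ {z : ℂ | z.re ∈ Set.Ioo α β ∧ z.im ∈ Set.Ioo γ δ}) :
    rectBoundaryIntegral f A B C D = rectBoundaryIntegral f α β γ δ := by
  -- membership facts
  have hre : ∀ z : ℂ, (z.re ≤ α ∨ β ≤ z.re) → z ∉ X := by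
    intro z h hz
    rcases h with h | h
    · exact absurd (hXR hz).1.1 (not_lt.2 h)
    · exact absurd (hXR hz).1.2 (not_lt.2 h)
  have him : ∀ z : ℂ, (z.im ≤ γ ∨ δ ≤ z.im) → z ∉ X := by
    intro z h hz
    rcases h with h | h
    · exact absurd (hXR hz).2.1 (not_lt.2 h)
    · exact absurd (hXR hz).2.2 (not_lt.2 h)
  have hC : ∀ x : ℝ, (x + C * Complex.I : ℂ) ∉ X := fun x =>
    him _ (Or.inl (by simp [hCγ]))
  have hD : ∀ x : ℝ, (x + D * Complex.I : ℂ) ∉ X := fun x =>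
    him _ (Or.inr (by simp [hδD]))
  have hα : ∀ y : ℝ, (α + y * Complex.I : ℂ) ∉ X := fun y =>
    hre _ (Or.inl (by simp))
  have hβ : ∀ y : ℝ, (β + y * Complex.I : ℂ) ∉ X := fun y =>
    hre _ (Or.inr (by simp))
  rw [rectAux_split_re f A B C D α (intIntH hf _ _ _ hC) (intIntH hf _ _ _ hC)
      (intIntH hf _ _ _ hD) (intIntH hf _ _ _ hD),
    rectAux_split_re f α B C D β (intIntH hf _ _ _ hC) (intIntH hf _ _ _ hC)
      (intIntH hf _ _ _ hD) (intIntH hf _ _ _ hD),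
    rectAux_split_im f α β C D γ (intIntV hf _ _ _ hα) (intIntV hf _ _ _ hα)
      (intIntV hf _ _ _ hβ) (intIntV hf _ _ _ hβ),
    rectAux_split_im f α β γ D δ (intIntV hf _ _ _ hα) (intIntV hf _ _ _ hα)
      (intIntV hf _ _ _ hβ) (intIntV hf _ _ _ hβ)]
  have z1 : rectBoundaryIntegral f A α C D = 0 :=
    rectAux_zero f hAα (hCγ.trans (hγδ.trans hδD))
      (diffOn_of_disjoint hf fun z hz => hre z (Or.inl hz.1.2))
  have z2 : rectBoundaryIntegral f β B C D = 0 :=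
    rectAux_zero f hβB (hCγ.trans (hγδ.trans hδD))
      (diffOn_of_disjoint hf fun z hz => hre z (Or.inr hz.1.1))
  have z3 : rectBoundaryIntegral f α β C γ = 0 :=
    rectAux_zero f hαβ hCγ
      (diffOn_of_disjoint hf fun z hz => him z (Or.inl hz.2.2))
  have z4 : rectBoundaryIntegral f α β δ D = 0 :=
    rectAux_zero f hαβ hδD
      (diffOn_of_disjoint hf fun z hz => him z (Or.inr hz.2.1))
  rw [z1, z2, z3, z4]
  ring

theorem rectBoundaryIntegral_eq_of_interior_supset (X : Set ℂ) (hX : IsCompact X)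
    (f : ℂ → ℂ) (hf : ∀ z ∉ X, DifferentiableAt ℂ f z)
    (α β γ δ α' β' γ' δ' : ℝ) (hαβ : α < β) (hγδ : γ < δ) (hαβ' : α' < β') (hγδ' : γ' < δ')
    (hXR : X ⊆ {z : ℂ | z.re ∈ Set.Ioo α β ∧ z.im ∈ Set.Ioo γ δ})
    (hXS : X ⊆ {z : ℂ | z.re ∈ Set.Ioo α' β' ∧ z.im ∈ Set.Ioo γ' δ'}) :
    rectBoundaryIntegral f α β γ δ = rectBoundaryIntegral f α' β' γ' δ' := by
  have h1 := rect_grow hf (min_le_left α α') hαβ.le (le_max_left β β')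
    (min_le_left γ γ') hγδ.le (le_max_left δ δ') hXR
  have h2 := rect_grow hf (min_le_right α α') hαβ'.le (le_max_right β β')
    (min_le_right γ γ') hγδ'.le (le_max_right δ δ') hXS
  rw [← h1, ← h2]
end

section
/- There exists a mapping w assigning to every pair (f, p), where f : [0,1] → ℂ is continuous with f(0) = f(1) (a loop) and p ∈ ℂ \ f([0,1]), an integer w(f, p), such that: (1) if f is constant then w(f, p) = 0, and if R is a rectangle with vertices a, b, c, d listed counter-clockwise from the lower-left corner, φ_R : [0,1] → ∂R is the piecewise-linear path with φ_R(t) = a_i + (a_{i+1} − a_i)(4t − i) for i/4 ≤ t ≤ (i+1)/4 (i = 0,1,2,3, with (a₀,a₁,a₂,a₃,a₄) = (a,b,c,d,a)), and p lies in the interior of R, then w(φ_R, p) = 1; (2) if p and q lie in the same connected component of ℂ \ f([0,1]) then w(f, p) = w(f, q); (3) if h : [0,1] × [0,1] → ℂ \ {p} is continuous with h(0, u) = h(1, u) for all u, then w(h(·,0), p) = w(h(·,1), p); (4) if s ∈ [0,1] and g(t) = f(s + t mod 1) for all t ∈ [0,1], then w(g, p) = w(f, p); (5) if f, g are loops with f(1)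 = g(0) and h is their concatenation (h(t) = f(2t) for t ∈ [0,1/2], h(t) = g(2t−1) for t ∈ [1/2,1]) and p ∉ h([0,1]), then w(h, p) = w(f, p) + w(g, p). -/
/-!
The winding number of a loop `g` around `0` is read off a continuous logarithm `L` of `g` along
`[0, 1]`: since `g 0 = g 1`, `L 1 - L 0 = 2πik` for an integer `k`, and `k` does not depend on the
choice of `L` because `exp : ℂ → ℂ \ {0}` is a covering map, so two logarithms of one map on a
connected set differ by a constant. Logarithms exist, even for homotopies on the square, by the
homotopy lifting property. When a whole homotopy of loops is lifted, its two vertical edges lift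
the same path, so both horizontal edges have the same increment; constancy on components follows by
moving the base point along a path in the complement. Change of starting point and concatenation
are handled by gluing logarithms, and for the rectangle a logarithm is built from principal
branches on the two halves of the circuit, which stay off opposite real half-axes.
-/

open Set

/-- The piecewise-linear counter-clockwise circuit traversing the boundary of the
rectangle `{z : α ≤ Re z ≤ β, γ ≤ Im z ≤ δ}`, starting at the lower-left corner:
`φ_R(t) = a_i + (a_{i+1} − a_i)(4t − i)` for `i/4 ≤ t ≤ (i+1)/4`, where
`(a₀, a₁, a₂, a₃, a₄) = (a, b, c, d, a)` are the vertices listed counter-clockwise. -/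
noncomputable def rectCircuit (α β γ δ : ℝ) : ℝ → ℂ := fun t =>
  let a : ℂ := (α : ℂ) + (γ : ℂ) * Complex.I
  let b : ℂ := (β : ℂ) + (γ : ℂ) * Complex.I
  let c : ℂ := (β : ℂ) + (δ : ℂ) * Complex.I
  let d : ℂ := (α : ℂ) + (δ : ℂ) * Complex.I
  if t ≤ 1 / 4 then a + (b - a) * ((4 * t - 0 : ℝ) : ℂ)
  else if t ≤ 1 / 2 then b + (c - b) * ((4 * t - 1 : ℝ) : ℂ)
  else if t ≤ 3 / 4 then c + (d - c) * ((4 * t - 2 : ℝ) : ℂ)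
  else d + (a - d) * ((4 * t - 3 : ℝ) : ℂ)

open Complex
open scoped Real

section LogLift

variable {X : Type*} [TopologicalSpace X]

def IsLogLiftOn (L g : X → ℂ) (s : Set X) : Prop :=
  ContinuousOn L s ∧ EqOn (exp ∘ L) g s

theorem IsLogLiftOn.comp {Y : Type*} [TopologicalSpace Y] {L g : X → ℂ} {s : Set X}
    {φ : Y → X} {t : Set Y} (hL : IsLogLiftOn L g s) (hφ : ContinuousOn φ t)
    (hst : MapsTo φ t s) : IsLogLiftOn (L ∘ φ) (g ∘ φ) t :=
  ⟨hL.1.comp hφ hst, fun _ hy => hL.2 (hst hy)⟩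

theorem sub_eq_sub_of_eqOn_exp_comp {L₁ L₂ : X → ℂ} {s : Set X} (hs : IsPreconnected s)
    (h₁ : ContinuousOn L₁ s) (h₂ : ContinuousOn L₂ s) (he : EqOn (exp ∘ L₁) (exp ∘ L₂) s)
    {a b : X} (ha : a ∈ s) (hb : b ∈ s) : L₁ a - L₁ b = L₂ a - L₂ b := by
  have hone : ∀ x ∈ s, exp (L₁ x - L₂ x) = 1 := fun x hx => by
    rw [exp_sub, div_eq_one_iff_eq (exp_ne_zero _)]
    exact he hx
  have key := isCoveringMap_exp.constOn_of_comp hs (h₁.sub h₂)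
    (fun x hx y hy => Subtype.ext (by simp only [Pi.sub_apply, hone x hx, hone y hy])) ha hb
  simp only [Pi.sub_apply] at key
  linear_combination key

end LogLift

theorem exists_exp_lift_of_ne_zero (H : C(unitInterval × unitInterval, ℂ)) (hH : ∀ x, H x ≠ 0) :
    ∃ F : C(unitInterval × unitInterval, ℂ), ∀ x, exp (F x) = H x := by
  let H' : C(unitInterval × unitInterval, {z : ℂ // z ≠ 0}) :=
    ⟨fun x => ⟨H x, hH x⟩, by fun_prop⟩
  obtain ⟨f, hf, -⟩ := isCoveringMap_exp.exists_path_lifts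
    (H'.comp ⟨fun u => (0, u), by fun_prop⟩) (log (H (0, 0))) (Subtype.ext (exp_log (hH _)).symm)
  refine ⟨isCoveringMap_exp.liftHomotopy H' f fun u => (congrFun hf u).symm, fun x => ?_⟩
  exact congrArg Subtype.val (congrFun (isCoveringMap_exp.liftHomotopy_lifts H' f _) x)

theorem exists_isLogLiftOn_square {H : ℝ × ℝ → ℂ} (hH : ContinuousOn H (Icc 0 1 ×ˢ Icc 0 1))
    (h0 : ∀ x ∈ Icc (0 : ℝ) 1 ×ˢ Icc (0 : ℝ) 1, H x ≠ 0) :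
    ∃ F, IsLogLiftOn F H (Icc 0 1 ×ˢ Icc 0 1) := by
  let H' : C(unitInterval × unitInterval, ℂ) :=
    ⟨fun x => H (x.1, x.2), hH.comp_continuous (by fun_prop) fun x => ⟨x.1.2, x.2.2⟩⟩
  obtain ⟨F, hF⟩ := exists_exp_lift_of_ne_zero H' fun x => h0 _ ⟨x.1.2, x.2.2⟩
  refine ⟨fun x => F (projIcc 0 1 zero_le_one x.1, projIcc 0 1 zero_le_one x.2),
    by fun_prop, fun x hx => ?_⟩
  simp [projIcc_of_mem _ hx.1, projIcc_of_mem _ hx.2, hF, H']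

theorem exists_isLogLiftOn_Icc {g : ℝ → ℂ} (hg : ContinuousOn g (Icc 0 1))
    (h0 : ∀ t ∈ Icc (0 : ℝ) 1, g t ≠ 0) : ∃ L, IsLogLiftOn L g (Icc 0 1) := by
  obtain ⟨F, hF⟩ := exists_isLogLiftOn_square (H := fun x => g x.1)
    (hg.comp continuousOn_fst fun _ hx => hx.1) fun x hx => h0 x.1 hx.1
  exact ⟨_, hF.comp (φ := fun t => (t, 0)) (by fun_prop)
    fun _ ht => ⟨ht, left_mem_Icc.2 zero_le_one⟩⟩

theorem IsLogLiftOn.exists_sub_eq_intCast_mul {L g : ℝ → ℂ} (hL : IsLogLiftOn L g (Icc 0 1))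
    (hloop : g 0 = g 1) : ∃ k : ℤ, L 1 - L 0 = k * (2 * π * I) := by
  refine exp_eq_one_iff.mp ?_
  rw [exp_sub, div_eq_one_iff_eq (exp_ne_zero _)]
  exact (hL.2 (right_mem_Icc.2 zero_le_one)).trans
    ((hL.2 (left_mem_Icc.2 zero_le_one)).trans hloop).symm

open Classical in
noncomputable def windingNumber (g : ℝ → ℂ) : ℤ :=
  if h : ∃ k : ℤ, ∃ L, IsLogLiftOn L g (Icc 0 1) ∧ L 1 - L 0 = k * (2 * π * I) then h.choose
  else 0

theorem windingNumber_eq {g L : ℝ → ℂ} {k : ℤ} (hL : IsLogLiftOn L g (Icc 0 1))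
    (hk : L 1 - L 0 = k * (2 * π * I)) : windingNumber g = k := by
  have h : ∃ k : ℤ, ∃ L, IsLogLiftOn L g (Icc 0 1) ∧ L 1 - L 0 = k * (2 * π * I) :=
    ⟨k, L, hL, hk⟩
  obtain ⟨L', hL', hk'⟩ := h.choose_spec
  rw [windingNumber, dif_pos h]
  have hL'L := sub_eq_sub_of_eqOn_exp_comp isPreconnected_Icc hL'.1 hL.1 (hL'.2.trans hL.2.symm)
    (right_mem_Icc.2 zero_le_one) (left_mem_Icc.2 zero_le_one)
  rw [hk', hk] at hL'L
  exact_mod_cast mul_right_cancel₀ two_pi_I_ne_zero hL'L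

theorem IsLogLiftOn.sub_eq_windingNumber_mul {L g : ℝ → ℂ} (hL : IsLogLiftOn L g (Icc 0 1))
    (hloop : g 0 = g 1) : L 1 - L 0 = windingNumber g * (2 * π * I) := by
  obtain ⟨k, hk⟩ := hL.exists_sub_eq_intCast_mul hloop
  rw [windingNumber_eq hL hk, hk]

theorem windingNumber_eq_of_homotopy {H : ℝ → ℝ → ℂ}
    (hH : ContinuousOn (fun x : ℝ × ℝ => H x.1 x.2) (Icc 0 1 ×ˢ Icc 0 1))
    (hloop : ∀ u ∈ Icc (0 : ℝ) 1, H 0 u = H 1 u)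
    (h0 : ∀ t ∈ Icc (0 : ℝ) 1, ∀ u ∈ Icc (0 : ℝ) 1, H t u ≠ 0) :
    windingNumber (H · 0) = windingNumber (H · 1) := by
  have h0I : (0 : ℝ) ∈ Icc (0 : ℝ) 1 := left_mem_Icc.2 zero_le_one
  have h1I : (1 : ℝ) ∈ Icc (0 : ℝ) 1 := right_mem_Icc.2 zero_le_one
  obtain ⟨F, hF⟩ := exists_isLogLiftOn_square hH fun x hx => h0 x.1 hx.1 x.2 hx.2
  have hrow (u : ℝ) (hu : u ∈ Icc (0 : ℝ) 1) :
      F (1, u) - F (0, u) = windingNumber (H · u) * (2 * π * I) :=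
    (hF.comp (φ := fun t => (t, u)) (by fun_prop) fun _ ht => ⟨ht, hu⟩).sub_eq_windingNumber_mul
      (hloop u hu)
  have hcol (t : ℝ) (ht : t ∈ Icc (0 : ℝ) 1) : IsLogLiftOn (fun u => F (t, u)) (H t) (Icc 0 1) :=
    hF.comp (φ := fun u => (t, u)) (by fun_prop) fun _ hu => ⟨ht, hu⟩
  have hedges := sub_eq_sub_of_eqOn_exp_comp isPreconnected_Icc (hcol 1 h1I).1 (hcol 0 h0I).1
    (fun u hu => ((hcol 1 h1I).2 hu).trans ((hloop u hu).symm.trans ((hcol 0 h0I).2 hu).symm))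
    h1I h0I
  have hw : (windingNumber (H · 0) : ℂ) * (2 * π * I) = windingNumber (H · 1) * (2 * π * I) := by
    rw [← hrow 0 h0I, ← hrow 1 h1I]
    linear_combination -hedges
  exact_mod_cast mul_right_cancel₀ two_pi_I_ne_zero hw

theorem IsOpen.exists_path_of_mem_connectedComponentIn {X : Type*} [TopologicalSpace X]
    [LocallyPathConnectedSpace X] {U : Set X} (hU : IsOpen U) {p q : X}
    (hq : q ∈ connectedComponentIn U p) : ∃ γ : Path p q, ∀ u, γ u ∈ U := by
  have hp : p ∈ U := by
    by_contra h
    simp [connectedComponentIn_eq_empty h] at hq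
  have hpc : IsPathConnected (connectedComponentIn U p) :=
    hU.connectedComponentIn.isConnected_iff_isPathConnected.1
      (isConnected_connectedComponentIn_iff.2 hp)
  have hpq := hpc.joinedIn p (mem_connectedComponentIn hp) q hq
  exact ⟨hpq.somePath, fun u => connectedComponentIn_subset _ _ (hpq.somePath_mem u)⟩

theorem windingNumber_sub_eq_of_path {f : ℝ → ℂ} {p q : ℂ} (hf : ContinuousOn f (Icc 0 1))
    (hloop : f 0 = f 1) (γ : Path p q) (hγ : ∀ u, γ u ∉ f '' Icc 0 1) :
    windingNumber (f · - p) = windingNumber (f · - q) := by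
  have hH : ContinuousOn (fun x : ℝ × ℝ => f x.1 - γ.extend x.2) (Icc 0 1 ×ˢ Icc 0 1) :=
    (hf.comp continuousOn_fst fun _ hx => hx.1).sub
      (γ.continuous_extend.comp continuous_snd).continuousOn
  have h0 : ∀ t ∈ Icc (0 : ℝ) 1, ∀ u ∈ Icc (0 : ℝ) 1, f t - γ.extend u ≠ 0 := fun t ht u hu h =>
    hγ ⟨u, hu⟩ ⟨t, ht, by rw [sub_eq_zero.1 h, γ.extend_apply hu]⟩
  simpa using windingNumber_eq_of_homotopy hH (fun u _ => by rw [hloop]) h0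

theorem IsLogLiftOn.glue {f g F G : ℝ → ℂ} {c : ℝ → ℝ} {s : Set ℝ}
    (hF : IsLogLiftOn F f (Icc 0 1)) (hG : IsLogLiftOn G g (Icc 0 1)) (hfg : f 1 = g 0)
    (hc : ContinuousOn c s) (hcs : MapsTo c s (Icc 0 2)) :
    IsLogLiftOn (fun t => F (min (c t) 1) + (G (max (c t) 1 - 1) - G 0))
      (fun t => if c t ≤ 1 then f (c t) else g (c t - 1)) s := by
  have hmin : MapsTo (fun t => min (c t) 1) s (Icc 0 1) := fun t ht =>
    ⟨le_min (hcs ht).1 zero_le_one, min_le_right _ _⟩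
  have hmax : MapsTo (fun t => max (c t) 1 - 1) s (Icc 0 1) := fun t ht =>
    ⟨by linarith [le_max_right (c t) 1], by linarith [max_le (hcs ht).2 one_le_two]⟩
  have hcmin : ContinuousOn (fun t => min (c t) 1) s :=
    (continuous_id.min continuous_const).comp_continuousOn hc
  have hcmax : ContinuousOn (fun t => max (c t) 1 - 1) s :=
    ((continuous_id.max continuous_const).sub continuous_const).comp_continuousOn hc
  refine ⟨(hF.1.comp hcmin hmin).add ((hG.1.comp hcmax hmax).sub continuousOn_const),
    fun t ht => ?_⟩
  have hG0 : exp (G 0) = g 0 := hG.2 (left_mem_Icc.2 zero_le_one)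
  have hg0 : g 0 ≠ 0 := hG0 ▸ exp_ne_zero _
  have hFt : exp (F (min (c t) 1)) = f (min (c t) 1) := hF.2 (hmin ht)
  have hGt : exp (G (max (c t) 1 - 1)) = g (max (c t) 1 - 1) := hG.2 (hmax ht)
  simp only [Function.comp_apply, exp_add, exp_sub, hFt, hGt, hG0]
  split_ifs with h
  · rw [min_eq_left h, max_eq_right h, sub_self, div_self hg0, mul_one]
  · rw [min_eq_right (not_le.1 h).le, max_eq_left (not_le.1 h).le, hfg, mul_div_cancel₀ _ hg0]

theorem windingNumber_rotate {f : ℝ → ℂ} {s : ℝ} (hf : ContinuousOn f (Icc 0 1))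
    (h0 : ∀ t ∈ Icc (0 : ℝ) 1, f t ≠ 0) (hloop : f 0 = f 1) (hs : s ∈ Icc (0 : ℝ) 1) :
    windingNumber (fun t => if s + t ≤ 1 then f (s + t) else f (s + t - 1))
      = windingNumber f := by
  obtain ⟨L, hL⟩ := exists_isLogLiftOn_Icc hf h0
  refine windingNumber_eq (hL.glue hL hloop.symm (by fun_prop) fun t ht =>
    ⟨by linarith [hs.1, ht.1], by linarith [hs.2, ht.2]⟩) ?_
  rw [← hL.sub_eq_windingNumber_mul hloop, min_eq_right (by linarith [hs.1]), add_zero,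
    min_eq_left hs.2, max_eq_left (by linarith [hs.1]), max_eq_right hs.2, add_sub_cancel_right,
    sub_self]
  ring

theorem windingNumber_concat {f g : ℝ → ℂ} (hf : ContinuousOn f (Icc 0 1))
    (hg : ContinuousOn g (Icc 0 1)) (hf0 : ∀ t ∈ Icc (0 : ℝ) 1, f t ≠ 0)
    (hg0 : ∀ t ∈ Icc (0 : ℝ) 1, g t ≠ 0) (hfl : f 0 = f 1) (hgl : g 0 = g 1) (hfg : f 1 = g 0) :
    windingNumber (fun t => if t ≤ 1 / 2 then f (2 * t) else g (2 * t - 1))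
      = windingNumber f + windingNumber g := by
  obtain ⟨F, hF⟩ := exists_isLogLiftOn_Icc hf hf0
  obtain ⟨G, hG⟩ := exists_isLogLiftOn_Icc hg hg0
  have hglue := hF.glue hG hfg (c := fun t => 2 * t) (s := Icc 0 1) (by fun_prop) fun t ht =>
    ⟨by linarith [ht.1], by linarith [ht.2]⟩
  have hcond (t : ℝ) : 2 * t ≤ 1 ↔ t ≤ 1 / 2 := by constructor <;> intro h <;> linarith
  simp only [hcond] at hglue
  refine windingNumber_eq hglue ?_
  rw [Int.cast_add, add_mul, ← hF.sub_eq_windingNumber_mul hfl,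
    ← hG.sub_eq_windingNumber_mul hgl]
  norm_num
  ring

theorem sub_ne_zero_of_notMem_image {α G : Type*} [AddGroup G] {f : α → G} {p : G} {s : Set α}
    (hp : p ∉ f '' s) : ∀ t ∈ s, f t - p ≠ 0 :=
  fun t ht h => hp ⟨t, ht, sub_eq_zero.1 h⟩

section concat

variable {β : Type*} {f g : ℝ → β}

theorem image_Icc_subset_concat_left :
    f '' Icc 0 1 ⊆ (fun t : ℝ => if t ≤ 1 / 2 then f (2 * t) else g (2 * t - 1)) '' Icc 0 1 := by
  rintro _ ⟨t, ht, rfl⟩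
  refine ⟨t / 2, ⟨by linarith [ht.1], by linarith [ht.2]⟩, ?_⟩
  simp only [if_pos (by linarith [ht.2] : t / 2 ≤ 1 / 2)]
  ring_nf

theorem image_Icc_subset_concat_right (hfg : f 1 = g 0) :
    g '' Icc 0 1 ⊆ (fun t : ℝ => if t ≤ 1 / 2 then f (2 * t) else g (2 * t - 1)) '' Icc 0 1 := by
  rintro _ ⟨t, ht, rfl⟩
  refine ⟨(t + 1) / 2, ⟨by linarith [ht.1], by linarith [ht.2]⟩, ?_⟩
  rcases ht.1.eq_or_lt with rfl | ht₀
  · norm_num [hfg]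
  · simp only [if_neg (by linarith : ¬ (t + 1) / 2 ≤ 1 / 2)]
    ring_nf

end concat

theorem log_neg_sub_log_of_im_neg {w : ℂ} (hw : w.im < 0) : log (-w) - log w = π * I := by
  simp only [log, norm_neg, arg_neg_eq_arg_add_pi_of_im_neg hw]
  push_cast
  ring

theorem windingNumber_eq_one_of_slitPlane {g : ℝ → ℂ} (hg : ContinuousOn g (Icc 0 1))
    (hloop : g 0 = g 1) (h₁ : ∀ t ∈ Icc (0 : ℝ) (1 / 2), g t ∈ slitPlane)
    (h₂ : ∀ t ∈ Icc (1 / 2 : ℝ) 1, -g t ∈ slitPlane) (hstart : (g 0).im < 0)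
    (hmid : 0 < (g (1 / 2)).im) : windingNumber g = 1 := by
  have hmin : MapsTo (fun t : ℝ => min t (1 / 2)) (Icc 0 1) (Icc 0 (1 / 2)) := fun t ht =>
    ⟨le_min ht.1 (by norm_num), min_le_right _ _⟩
  have hmax : MapsTo (fun t : ℝ => max t (1 / 2)) (Icc 0 1) (Icc (1 / 2) 1) := fun t ht =>
    ⟨le_max_right _ _, max_le ht.2 (by norm_num)⟩
  have hhalf : g (1 / 2) ≠ 0 := neg_ne_zero.1 (slitPlane_ne_zero (h₂ _ ⟨le_rfl, by norm_num⟩))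
  have hL : IsLogLiftOn
      (fun t => log (g (min t (1 / 2))) + (log (-g (max t (1 / 2))) - log (-g (1 / 2))))
      g (Icc 0 1) := by
    refine ⟨ContinuousOn.add ?_ (ContinuousOn.sub ?_ continuousOn_const), fun t ht => ?_⟩
    · exact (hg.comp (continuous_id.min continuous_const).continuousOn
        fun t ht => Icc_subset_Icc le_rfl (by norm_num) (hmin ht)).clog fun t ht => h₁ _ (hmin ht)
    · exact (hg.comp (continuous_id.max continuous_const).continuousOn
        fun t ht => Icc_subset_Icc (by norm_num) le_rfl (hmax ht)).neg.clog
          fun t ht => h₂ _ (hmax ht)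
    simp only [Function.comp_apply, exp_add, exp_sub]
    rcases le_total t (1 / 2) with h | h
    · rw [min_eq_left h, max_eq_right h, div_self (exp_ne_zero _), mul_one,
        exp_log (slitPlane_ne_zero (h₁ t ⟨ht.1, h⟩))]
    · rw [min_eq_right h, max_eq_left h, exp_log hhalf,
        exp_log (slitPlane_ne_zero (h₂ t ⟨h, ht.2⟩)), exp_log (neg_ne_zero.2 hhalf)]
      field_simp
  refine windingNumber_eq hL ?_
  have h1 := log_neg_sub_log_of_im_neg (hloop ▸ hstart)
  have h2 := log_neg_sub_log_of_im_neg (w := -g (1 / 2)) (by simpa using hmid)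
  rw [neg_neg] at h2
  norm_num [hloop]
  linear_combination h1 + h2

section rectCircuit

variable {α β γ δ t : ℝ}

theorem continuous_rectCircuit : Continuous (rectCircuit α β γ δ) := by
  refine Continuous.if_le (by fun_prop) (Continuous.if_le (by fun_prop)
    (Continuous.if_le (by fun_prop) (by fun_prop) continuous_id continuous_const ?_)
    continuous_id continuous_const ?_) continuous_id continuous_const ?_ <;>
  · intro t ht
    subst ht
    norm_num <;> ring

theorem rectCircuit_zero : rectCircuit α β γ δ 0 = rectCircuit α β γ δ 1 := by
  norm_num [rectCircuit]

theorem rectCircuit_im_of_le (ht : t ≤ 1 / 4) : (rectCircuit α β γ δ t).im = γ := by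
  simp only [rectCircuit, if_pos ht]
  simp

theorem rectCircuit_re_of_mem (ht₁ : 1 / 4 < t) (ht₂ : t ≤ 1 / 2) :
    (rectCircuit α β γ δ t).re = β := by
  simp only [rectCircuit, if_neg ht₁.not_ge, if_pos ht₂]
  simp

theorem rectCircuit_im_of_mem (ht₁ : 1 / 2 ≤ t) (ht₂ : t ≤ 3 / 4) :
    (rectCircuit α β γ δ t).im = δ := by
  rcases ht₁.eq_or_lt with rfl | ht₁
  · norm_num [rectCircuit]
  · simp only [rectCircuit, if_neg (by linarith : ¬ t ≤ 1 / 4), if_neg ht₁.not_ge, if_pos ht₂]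
    simp

theorem rectCircuit_re_of_lt (ht : 3 / 4 < t) : (rectCircuit α β γ δ t).re = α := by
  simp only [rectCircuit, if_neg (by linarith : ¬ t ≤ 1 / 4), if_neg (by linarith : ¬ t ≤ 1 / 2),
    if_neg ht.not_ge]
  simp

theorem windingNumber_rectCircuit {p : ℂ} (hre : p.re ∈ Ioo α β) (him : p.im ∈ Ioo γ δ) :
    windingNumber (rectCircuit α β γ δ · - p) = 1 := by
  refine windingNumber_eq_one_of_slitPlane
    (continuous_rectCircuit.sub continuous_const).continuousOn
    (congrArg (· - p) rectCircuit_zero) (fun t ht => ?_) (fun t ht => ?_) ?_ ?_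
  · rcases le_or_gt t (1 / 4) with h | h
    · exact .inr (by rw [sub_im, rectCircuit_im_of_le h]; exact (sub_neg.2 him.1).ne)
    · exact .inl (by rw [sub_re, rectCircuit_re_of_mem h ht.2]; exact sub_pos.2 hre.2)
  · rcases le_or_gt t (3 / 4) with h | h
    · refine .inr ?_
      rw [neg_im, sub_im, rectCircuit_im_of_mem ht.1 h]
      exact neg_ne_zero.2 (sub_pos.2 him.2).ne'
    · exact .inl (by rw [neg_re, sub_re, rectCircuit_re_of_lt h]; exact neg_pos.2 (sub_neg.2 hre.1))
  · rw [sub_im, rectCircuit_im_of_le (by norm_num)]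
    exact sub_neg.2 him.1
  · rw [sub_im, rectCircuit_im_of_mem le_rfl (by norm_num)]
    exact sub_pos.2 him.2

end rectCircuit

theorem exists_winding_number :
    ∃ w : (ℝ → ℂ) → ℂ → ℤ,
      -- (1) constant loops have winding number 0
      (∀ (c p : ℂ), p ≠ c → w (fun _ => c) p = 0) ∧
      -- (1) the rectangular circuit winds once around interior points
      (∀ α β γ δ : ℝ, α < β → γ < δ → ∀ p : ℂ,
        p.re ∈ Ioo α β → p.im ∈ Ioo γ δ → w (rectCircuit α β γ δ) p = 1) ∧
      -- (2) constancy on components of the complement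
      (∀ (f : ℝ → ℂ) (p q : ℂ), ContinuousOn f (Icc 0 1) → f 0 = f 1 →
        p ∉ f '' Icc 0 1 →
        q ∈ connectedComponentIn ((f '' Icc 0 1)ᶜ) p →
        w f p = w f q) ∧
      -- (3) homotopy invariance
      (∀ (h : ℝ → ℝ → ℂ) (p : ℂ),
        ContinuousOn (fun x : ℝ × ℝ => h x.1 x.2) (Icc 0 1 ×ˢ Icc 0 1) →
        (∀ u ∈ Icc (0 : ℝ) 1, h 0 u = h 1 u) →
        (∀ t ∈ Icc (0 : ℝ) 1, ∀ u ∈ Icc (0 : ℝ) 1, h t u ≠ p) →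
        w (fun t => h t 0) p = w (fun t => h t 1) p) ∧
      -- (4) invariance under change of the starting point
      (∀ (f : ℝ → ℂ) (p : ℂ) (s : ℝ), ContinuousOn f (Icc 0 1) → f 0 = f 1 →
        p ∉ f '' Icc 0 1 → s ∈ Icc (0 : ℝ) 1 →
        w (fun t => if s + t ≤ 1 then f (s + t) else f (s + t - 1)) p = w f p) ∧
      -- (5) additivity under concatenation of loops
      (∀ (f g : ℝ → ℂ) (p : ℂ), ContinuousOn f (Icc 0 1) → ContinuousOn g (Icc 0 1) →
        f 0 = f 1 → g 0 = g 1 → f 1 = g 0 →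
        p ∉ (fun t : ℝ => if t ≤ 1 / 2 then f (2 * t) else g (2 * t - 1)) '' Icc 0 1 →
        w (fun t : ℝ => if t ≤ 1 / 2 then f (2 * t) else g (2 * t - 1)) p
          = w f p + w g p) := by
  refine ⟨fun f p => windingNumber (f · - p), fun c p hp => ?_, fun α β γ δ _ _ p hre him =>
    windingNumber_rectCircuit hre him, fun f p q hf hloop _ hq => ?_, fun h p hh hloop hp => ?_,
    fun f p s hf hloop hp hs => ?_, fun f g p hf hg hfl hgl hfg hp => ?_⟩
  · exact windingNumber_eq (L := fun _ => log (c - p))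
      ⟨continuousOn_const, fun _ _ => exp_log (sub_ne_zero.2 hp.symm)⟩ (by simp)
  · obtain ⟨γ, hγ⟩ := (isCompact_Icc.image_of_continuousOn hf).isClosed.isOpen_compl
      |>.exists_path_of_mem_connectedComponentIn hq
    exact windingNumber_sub_eq_of_path hf hloop γ hγ
  · exact windingNumber_eq_of_homotopy (hh.sub continuousOn_const)
      (fun u hu => by rw [hloop u hu]) fun t ht u hu => sub_ne_zero.2 (hp t ht u hu)
  · convert windingNumber_rotate (f := (f · - p)) (hf.sub continuousOn_const)
      (sub_ne_zero_of_notMem_image hp) (congrArg (· - p) hloop) hs using 2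
    exact funext fun _ => apply_ite (· - p) _ _ _
  · convert windingNumber_concat (f := (f · - p)) (g := (g · - p)) (hf.sub continuousOn_const)
      (hg.sub continuousOn_const)
      (sub_ne_zero_of_notMem_image fun h => hp (image_Icc_subset_concat_left h))
      (sub_ne_zero_of_notMem_image fun h => hp (image_Icc_subset_concat_right hfg h))
      (congrArg (· - p) hfl) (congrArg (· - p) hgl) (congrArg (· - p) hfg) using 2
    exact funext fun _ => apply_ite (· - p) _ _ _
end

section
/- Let R be a square in ℂ, let A ⊆ R be a nonempty subset, and let F be a family of squares contained in R such that for every a ∈ A there is a δ > 0 such that every square S ⊆ R with a ∈ S and diam(S) < δ belongs to F. Then there exists an at most countable subfamily G ⊆ F whose members have pairwise disjoint interiors and whose union covers A. -/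
open Set

/-- The (closed) square with lower-left corner `x + yi` and side length `s`. -/
def closedSquare (x y s : ℝ) : Set ℂ :=
  {z : ℂ | z.re ∈ Icc x (x + s) ∧ z.im ∈ Icc y (y + s)}

/-!
Work with the dyadic subsquares of `R`. By fineness, every `a ∈ A` lies in a dyadic square that
belongs to `F`; select the members of `F` that are dyadic of the coarsest level at which this
happens for some `a ∈ A`. Two dyadic squares are nested or have disjoint interiors, and a selected
square properly containing another selected one would contradict the minimality of the latter's
level. There are only countably many dyadic squares.
-/

lemma closedSquare_eq_reProdIm (x y s : ℝ) :
    closedSquare x y s = Icc x (x + s) ×ℂ Icc y (y + s) := rfl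

lemma diam_closedSquare_le {x y s : ℝ} (hs : 0 ≤ s) :
    Metric.diam (closedSquare x y s) ≤ 2 * s := by
  refine Metric.diam_le_of_forall_dist_le (by positivity) fun z hz w hw => ?_
  have hre := Real.dist_le_of_mem_Icc hz.1 hw.1
  have him := Real.dist_le_of_mem_Icc hz.2 hw.2
  rw [add_sub_cancel_left, Real.dist_eq] at hre him
  calc dist z w = ‖z - w‖ := dist_eq_norm z w
    _ ≤ |(z - w).re| + |(z - w).im| := Complex.norm_le_abs_re_add_abs_im _
    _ ≤ 2 * s := by rw [Complex.sub_re, Complex.sub_im]; linarith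

lemma closedSquare_eq_of_subset {x y x' y' s : ℝ} (hs : 0 ≤ s)
    (h : closedSquare x y s ⊆ closedSquare x' y' s) :
    closedSquare x y s = closedSquare x' y' s := by
  have hlo := @h ⟨x, y⟩ ⟨left_mem_Icc.2 (by linarith), left_mem_Icc.2 (by linarith)⟩
  have hhi := @h ⟨x + s, y + s⟩ ⟨right_mem_Icc.2 (by linarith), right_mem_Icc.2 (by linarith)⟩
  obtain rfl : x = x' := by linarith [hlo.1.1, hhi.1.2]
  obtain rfl : y = y' := by linarith [hlo.2.1, hhi.2.2]
  rfl

lemma Monotone.Icc_subset_or_disjoint_Ioo {α : Type*} [Preorder α] {e : ℕ → α}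
    (he : Monotone e) (p i j : ℕ) :
    Icc (e j) (e (j + 1)) ⊆ Icc (e (i * p)) (e ((i + 1) * p)) ∨
      Disjoint (Ioo (e (i * p)) (e ((i + 1) * p))) (Ioo (e j) (e (j + 1))) := by
  by_cases h : i * p ≤ j ∧ j + 1 ≤ (i + 1) * p
  · exact .inl (Icc_subset_Icc (he h.1) (he h.2))
  · refine .inr (disjoint_left.2 fun t ht ht' => ?_)
    rcases not_and_or.1 h with h | h
    · exact lt_irrefl t ((ht'.2.trans_le (he (by omega))).trans ht.1)
    · exact lt_irrefl t ((ht.2.trans_le (he (by omega))).trans ht'.1)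

lemma exists_nat_lt_mem_Icc {u : ℝ} {N : ℕ} (hN : 0 < N) (hu : u ∈ Icc 0 (N : ℝ)) :
    ∃ i < N, u ∈ Icc (i : ℝ) (i + 1) := by
  rcases hu.2.lt_or_eq with hlt | rfl
  · exact ⟨⌊u⌋₊, (Nat.floor_lt hu.1).2 hlt, Nat.floor_le hu.1, (Nat.lt_floor_add_one u).le⟩
  · refine ⟨N - 1, by omega, ?_⟩
    rw [Nat.cast_pred hN]
    constructor <;> linarith

section Dyadic

variable {a s x₀ y₀ s₀ : ℝ} {n : ℕ}

noncomputable def dyadicPt (a s : ℝ) (n i : ℕ) : ℝ := a + i * (s / 2 ^ n)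

lemma dyadicPt_zero : dyadicPt a s n 0 = a := by simp [dyadicPt]

lemma dyadicPt_two_pow : dyadicPt a s n (2 ^ n) = a + s := by
  simp [dyadicPt, mul_div_cancel₀]

lemma dyadicPt_succ (i : ℕ) : dyadicPt a s n (i + 1) = dyadicPt a s n i + s / 2 ^ n := by
  simp only [dyadicPt]; push_cast; ring

lemma dyadicPt_mul_two_pow (a s : ℝ) (n k i : ℕ) :
    dyadicPt a s (n + k) (i * 2 ^ k) = dyadicPt a s n i := by
  simp only [dyadicPt, pow_add]; push_cast; field_simp

lemma monotone_dyadicPt (hs : 0 ≤ s) : Monotone (dyadicPt a s n) := fun i j hij => by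
  unfold dyadicPt; gcongr

lemma exists_mem_Icc_dyadicPt (hs : 0 < s) (n : ℕ) {t : ℝ} (ht : t ∈ Icc a (a + s)) :
    ∃ i, t ∈ Icc (dyadicPt a s n i) (dyadicPt a s n (i + 1)) ∧
      Icc (dyadicPt a s n i) (dyadicPt a s n (i + 1)) ⊆ Icc a (a + s) := by
  have hh : 0 < s / 2 ^ n := by positivity
  have hu : (t - a) / (s / 2 ^ n) ∈ Icc 0 ((2 ^ n : ℕ) : ℝ) := by
    push_cast
    rw [mem_Icc, le_div_iff₀ hh, div_le_iff₀ hh, mul_div_cancel₀ _ (by positivity)]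
    constructor <;> linarith [ht.1, ht.2]
  obtain ⟨i, hi, hiu⟩ := exists_nat_lt_mem_Icc (by positivity) hu
  refine ⟨i, ?_, Icc_subset_Icc ?_ ?_⟩
  · rw [mem_Icc, le_div_iff₀ hh, div_le_iff₀ hh] at hiu
    simp only [dyadicPt, mem_Icc]; push_cast
    constructor <;> linarith [hiu.1, hiu.2]
  · simpa [dyadicPt_zero] using monotone_dyadicPt (a := a) (n := n) hs.le (Nat.zero_le i)
  · simpa [dyadicPt_two_pow] using monotone_dyadicPt (a := a) (n := n) hs.le (Nat.succ_le_of_lt hi)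

noncomputable def dyadicSquare (x₀ y₀ s₀ : ℝ) (n : ℕ) (p : ℕ × ℕ) : Set ℂ :=
  closedSquare (dyadicPt x₀ s₀ n p.1) (dyadicPt y₀ s₀ n p.2) (s₀ / 2 ^ n)

lemma dyadicSquare_eq_reProdIm (p : ℕ × ℕ) :
    dyadicSquare x₀ y₀ s₀ n p =
      Icc (dyadicPt x₀ s₀ n p.1) (dyadicPt x₀ s₀ n (p.1 + 1)) ×ℂ
        Icc (dyadicPt y₀ s₀ n p.2) (dyadicPt y₀ s₀ n (p.2 + 1)) := by
  rw [dyadicSquare, closedSquare_eq_reProdIm, dyadicPt_succ, dyadicPt_succ]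

lemma exists_mem_dyadicSquare (hs₀ : 0 < s₀) (n : ℕ) {z : ℂ}
    (hz : z ∈ closedSquare x₀ y₀ s₀) :
    ∃ p, z ∈ dyadicSquare x₀ y₀ s₀ n p ∧ dyadicSquare x₀ y₀ s₀ n p ⊆ closedSquare x₀ y₀ s₀ := by
  obtain ⟨i, hzi, hi⟩ := exists_mem_Icc_dyadicPt hs₀ n hz.1
  obtain ⟨j, hzj, hj⟩ := exists_mem_Icc_dyadicPt hs₀ n hz.2
  refine ⟨(i, j), ?_⟩
  rw [dyadicSquare_eq_reProdIm, closedSquare_eq_reProdIm]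
  exact ⟨ ⟨hzi, hzj⟩, inter_subset_inter (preimage_mono hi) (preimage_mono hj)⟩

lemma dyadicSquare_subset_or_disjoint_interior (hs₀ : 0 < s₀) {n m : ℕ} (p q : ℕ × ℕ)
    (hnm : n ≤ m) :
    dyadicSquare x₀ y₀ s₀ m q ⊆ dyadicSquare x₀ y₀ s₀ n p ∨
      Disjoint (interior (dyadicSquare x₀ y₀ s₀ n p)) (interior (dyadicSquare x₀ y₀ s₀ m q)) := by
  obtain ⟨k, rfl⟩ := Nat.exists_eq_add_of_le hnm
  simp only [dyadicSquare_eq_reProdIm, Complex.interior_reProdIm, interior_Icc]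
  rw [← dyadicPt_mul_two_pow x₀ s₀ n k p.1, ← dyadicPt_mul_two_pow x₀ s₀ n k (p.1 + 1),
    ← dyadicPt_mul_two_pow y₀ s₀ n k p.2, ← dyadicPt_mul_two_pow y₀ s₀ n k (p.2 + 1)]
  rcases (monotone_dyadicPt hs₀.le).Icc_subset_or_disjoint_Ioo (2 ^ k) p.1 q.1 with hx | hx
  · rcases (monotone_dyadicPt hs₀.le).Icc_subset_or_disjoint_Ioo (2 ^ k) p.2 q.2 with hy | hy
    · exact .inl (inter_subset_inter (preimage_mono hx) (preimage_mono hy))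
    · exact .inr ((hy.preimage Complex.im).mono inter_subset_right inter_subset_right)
  · exact .inr ((hx.preimage Complex.re).mono inter_subset_left inter_subset_left)

end Dyadic

theorem exists_subfamily_pairwise_disjoint_interior_of_nested {X ι : Type*}
    [TopologicalSpace X] (Q : ℕ → ι → Set X)
    (hQ : ∀ {n m : ℕ} (i j : ι), n ≤ m →
      Q m j ⊆ Q n i ∨ Disjoint (interior (Q n i)) (interior (Q m j)))
    (hQ_eq : ∀ {n : ℕ} (i j : ι), Q n j ⊆ Q n i → Q n j = Q n i)
    {F : Set (Set X)} {A : Set X} (hA : ∀ a ∈ A, ∃ n i, a ∈ Q n i ∧ Q n i ∈ F) :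
    ∃ G ⊆ F, G ⊆ range (Function.uncurry Q) ∧
      (G.Pairwise fun S T => Disjoint (interior S) (interior T)) ∧ A ⊆ ⋃₀ G := by
  classical
  let selected : Set (ℕ × ι) := {p | Q p.1 p.2 ∈ F ∧
    ∃ a ∈ A ∩ Q p.1 p.2, ∀ m < p.1, ∀ j, a ∈ Q m j → Q m j ∉ F}
  have disjoint_of_le : ∀ p ∈ selected, ∀ q ∈ selected, p.1 ≤ q.1 → Q q.1 q.2 ≠ Q p.1 p.2 →
      Disjoint (interior (Q p.1 p.2)) (interior (Q q.1 q.2)) := by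
    rintro ⟨n, i⟩ ⟨hiF, -⟩ ⟨m, j⟩ ⟨-, b, ⟨-, hbj⟩, hb⟩ hnm hne
    refine (hQ i j hnm).resolve_left fun hsub => hne ?_
    obtain rfl : n = m := hnm.eq_of_not_lt fun hlt => hb n hlt i (hsub hbj) hiF
    exact hQ_eq i j hsub
  refine ⟨Function.uncurry Q '' selected, ?_, image_subset_range _ _, ?_, ?_⟩
  · rintro _ ⟨p, hp, rfl⟩
    exact hp.1
  · rintro _ ⟨p, hp, rfl⟩ _ ⟨q, hq, rfl⟩ hne
    rcases le_total p.1 q.1 with h | h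
    · exact disjoint_of_le p hp q hq h (Ne.symm hne)
    · exact (disjoint_of_le q hq p hp h hne).symm
  · intro a ha
    have hex := hA a ha
    obtain ⟨i, hai, hiF⟩ := Nat.find_spec hex
    exact mem_sUnion_of_mem hai ⟨(Nat.find hex, i),
      ⟨hiF, a, ⟨ha, hai⟩, fun m hm j haj hjF => Nat.find_min hex hm ⟨j, haj, hjF⟩⟩, rfl⟩

theorem vitali_type_covering_countable_general
    (x₀ y₀ s₀ : ℝ) (hs₀ : 0 < s₀) (A : Set ℂ)
    (hAR : A ⊆ closedSquare x₀ y₀ s₀) (F : Set (Set ℂ))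
    (hfine : ∀ a ∈ A, ∃ δ : ℝ, 0 < δ ∧ ∀ x y s : ℝ, 0 < s →
      closedSquare x y s ⊆ closedSquare x₀ y₀ s₀ → a ∈ closedSquare x y s → Metric.diam (closedSquare x y s) < δ →
      closedSquare x y s ∈ F) :
    ∃ G ⊆ F, G.Countable ∧
      (G.Pairwise fun S T => Disjoint (interior S) (interior T)) ∧
      A ⊆ ⋃₀ G := by
  have hdyadic : ∀ a ∈ A, ∃ n p, a ∈ dyadicSquare x₀ y₀ s₀ n p ∧ dyadicSquare x₀ y₀ s₀ n p ∈ F := by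
    intro a ha
    obtain ⟨δ, hδ, hδF⟩ := hfine a ha
    obtain ⟨n, hn⟩ := pow_unbounded_of_one_lt (2 * s₀ / δ) one_lt_two
    have hsmall : 2 * (s₀ / 2 ^ n) < δ := by
      rw [div_lt_iff₀ hδ] at hn
      rw [← mul_div_assoc, div_lt_iff₀ (by positivity)]
      linarith
    obtain ⟨p, hap, hpR⟩ := exists_mem_dyadicSquare hs₀ n (hAR ha)
    exact ⟨n, p, hap, hδF _ _ _ (by positivity) hpR hap
      ((diam_closedSquare_le (by positivity)).trans_lt hsmall)⟩
  obtain ⟨G, hGF, hGQ, hG, hAG⟩ := exists_subfamily_pairwise_disjoint_interior_of_nested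
    (dyadicSquare x₀ y₀ s₀) (dyadicSquare_subset_or_disjoint_interior hs₀)
    (fun _ _ => closedSquare_eq_of_subset (by positivity)) hdyadic
  exact ⟨G, hGF, (countable_range _).mono hGQ, hG, hAG⟩

theorem vitali_type_covering_countable
    (x₀ y₀ s₀ : ℝ) (hs₀ : 0 < s₀) (A : Set ℂ) (hA : A.Nonempty)
    (hAR : A ⊆ closedSquare x₀ y₀ s₀) (F : Set (Set ℂ))
    (hF : ∀ S ∈ F, (∃ x y s, 0 < s ∧ S = closedSquare x y s) ∧ S ⊆ closedSquare x₀ y₀ s₀)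
    (hfine : ∀ a ∈ A, ∃ δ : ℝ, 0 < δ ∧ ∀ x y s : ℝ, 0 < s →
      closedSquare x y s ⊆ closedSquare x₀ y₀ s₀ → a ∈ closedSquare x y s → Metric.diam (closedSquare x y s) < δ →
      closedSquare x y s ∈ F) :
    ∃ G ⊆ F, G.Countable ∧
      (G.Pairwise fun S T => Disjoint (interior S) (interior T)) ∧
      A ⊆ ⋃₀ G :=
  vitali_type_covering_countable_general x₀ y₀ s₀ hs₀ A hAR F hfine
end

section
/- Let R be a rectangle in ℂ and let f : ℂ → ℂ be complex differentiable at every point of R. Then for every ε > 0 and every rectangle S contained in the interior of R there exists δ > 0 such that for all z, x ∈ S with z ≠ x and |z − x| < δ one has |f'(z) − (f(z) − f(x))/(z − x)| < ε. -/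
open Set

/-!
Holomorphic functions are `C¹`, so `f'` is uniformly continuous on the compact rectangle `S`:
`‖f'(w) - f'(z)‖ ≤ ε` once `‖w - z‖ < d`. The mean value inequality on the convex set
`S ∩ ball z d`, applied to `w ↦ f w - f'(z) w`, then gives
`‖f(x) - f(z) - f'(z)(x - z)‖ ≤ ε ‖x - z‖` there; divide by `x - z`.
-/

theorem Convex.reProdIm {s t : Set ℝ} (hs : Convex ℝ s) (ht : Convex ℝ t) :
    Convex ℝ (s ×ℂ t) :=
  (hs.linear_preimage Complex.reLm).inter (ht.linear_preimage Complex.imLm)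

section UniformFirstOrderApproximation

variable {𝕜 E F : Type*} [NontriviallyNormedField 𝕜] [IsRCLikeNormedField 𝕜]
  [NormedAddCommGroup E] [NormedSpace ℝ E] [NormedSpace 𝕜 E]
  [NormedAddCommGroup F] [NormedSpace 𝕜 F] {f : E → F} {K : Set E}

theorem IsCompact.exists_pos_forall_norm_sub_sub_fderiv_le (hK : IsCompact K)
    (hKc : Convex ℝ K) (hf : ∀ x ∈ K, DifferentiableAt 𝕜 f x)
    (hf' : ContinuousOn (fderiv 𝕜 f) K) {ε : ℝ} (hε : 0 < ε) :
    ∃ d > 0, ∀ x ∈ K, ∀ y ∈ K, ‖y - x‖ < d →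
      ‖f y - f x - fderiv 𝕜 f x (y - x)‖ ≤ ε * ‖y - x‖ := by
  obtain ⟨d, hd, hfd⟩ :=
    Metric.uniformContinuousOn_iff.1 (hK.uniformContinuousOn_of_continuous hf') ε hε
  refine ⟨d, hd, fun x hx y hy hxy => ?_⟩
  have hy' : y ∈ K ∩ Metric.ball x d := ⟨hy, by rwa [Metric.mem_ball, dist_eq_norm]⟩
  refine (hKc.inter (convex_ball x d)).norm_image_sub_le_of_norm_fderiv_le'
    (fun w hw => hf w hw.1) (fun w hw => ?_) ⟨hx, Metric.mem_ball_self hd⟩ hy'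
  rw [← dist_eq_norm]
  exact (hfd w hw.1 x hx hw.2).le

end UniformFirstOrderApproximation

theorem deriv_uniformly_approximated_by_difference_quotients_general
    (α β γ δ : ℝ) (f : ℂ → ℂ)
    (hf : ∀ z ∈ {z : ℂ | z.re ∈ Icc α β ∧ z.im ∈ Icc γ δ}, DifferentiableAt ℂ f z)
    (ε : ℝ) (hε : 0 < ε)
    (α' β' γ' δ' : ℝ)
    (hS : {z : ℂ | z.re ∈ Icc α' β' ∧ z.im ∈ Icc γ' δ'} ⊆
      {z : ℂ | z.re ∈ Ioo α β ∧ z.im ∈ Ioo γ δ}) :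
    ∃ d : ℝ, 0 < d ∧ ∀ z ∈ {z : ℂ | z.re ∈ Icc α' β' ∧ z.im ∈ Icc γ' δ'},
      ∀ x ∈ {z : ℂ | z.re ∈ Icc α' β' ∧ z.im ∈ Icc γ' δ'},
        z ≠ x → ‖z - x‖ < d →
          ‖deriv f z - (f z - f x) / (z - x)‖ < ε := by
  have hU : IsOpen (Ioo α β ×ℂ Ioo γ δ) := isOpen_Ioo.reProdIm isOpen_Ioo
  have hfU : DifferentiableOn ℂ f (Ioo α β ×ℂ Ioo γ δ) := fun z hz =>
    (hf z ⟨Ioo_subset_Icc_self hz.1, Ioo_subset_Icc_self hz.2⟩).differentiableWithinAt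
  have hf' : ContinuousOn (fderiv ℂ f) (Icc α' β' ×ℂ Icc γ' δ') :=
    ((hfU.contDiffOn (n := 1) hU).continuousOn_fderiv_of_isOpen hU le_rfl).mono hS
  obtain ⟨d, hd, hfd⟩ :=
    (isCompact_Icc.reProdIm isCompact_Icc).exists_pos_forall_norm_sub_sub_fderiv_le
      ((convex_Icc _ _).reProdIm (convex_Icc _ _))
      (fun z hz => hfU.differentiableAt (hU.mem_nhds (hS hz))) hf' (half_pos hε)
  refine ⟨d, hd, fun z hz x hx hzx hzxd => ?_⟩
  have hzx' : z - x ≠ 0 := sub_ne_zero.2 hzx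
  have hnorm : ‖z - x‖ ≠ 0 := norm_ne_zero_iff.2 hzx'
  have key := hfd z hz x hx (by rwa [norm_sub_rev])
  rw [fderiv_eq_smul_deriv, norm_sub_rev x z] at key
  calc ‖deriv f z - (f z - f x) / (z - x)‖
        = ‖f x - f z - (x - z) • deriv f z‖ / ‖z - x‖ := by
        rw [← norm_div, smul_eq_mul]
        congr 1
        field_simp
        ring
    _ ≤ ε / 2 * ‖z - x‖ / ‖z - x‖ := by gcongr
    _ = ε / 2 := mul_div_cancel_right₀ _ hnorm
    _ < ε := half_lt_self hε

theorem deriv_uniformly_approximated_by_difference_quotients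
    (α β γ δ : ℝ) (hαβ : α < β) (hγδ : γ < δ) (f : ℂ → ℂ)
    (hf : ∀ z ∈ {z : ℂ | z.re ∈ Icc α β ∧ z.im ∈ Icc γ δ}, DifferentiableAt ℂ f z)
    (ε : ℝ) (hε : 0 < ε)
    (α' β' γ' δ' : ℝ) (hαβ' : α' < β') (hγδ' : γ' < δ')
    (hS : {z : ℂ | z.re ∈ Icc α' β' ∧ z.im ∈ Icc γ' δ'} ⊆
      {z : ℂ | z.re ∈ Ioo α β ∧ z.im ∈ Ioo γ δ}) :
    ∃ d : ℝ, 0 < d ∧ ∀ z ∈ {z : ℂ | z.re ∈ Icc α' β' ∧ z.im ∈ Icc γ' δ'},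
      ∀ x ∈ {z : ℂ | z.re ∈ Icc α' β' ∧ z.im ∈ Icc γ' δ'},
        z ≠ x → ‖z - x‖ < d →
          ‖deriv f z - (f z - f x) / (z - x)‖ < ε :=
  deriv_uniformly_approximated_by_difference_quotients_general α β γ δ f hf ε hε α' β' γ' δ' hS
end
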